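/- Let ρ be a fully separable density operator on (ℂ^d)^{⊗n}, let {B_k^(l)}_{k=1}^N be any choice of N MUBs on each subsystem l ∈ {1,…,n}, and let f be an entropic-uncertainty bound for N MUBs in dimension d. Then for every subsystem l, ∑_{k=1}^N I(B_k^(l) : B_k^(l̄) | ρ) ≤ N·log₂ d − f. -/

import Mathlib

open scoped BigOperators ComplexOrder

namespace Paper

noncomputable section

/-- Base-2 Shannon entropy of a finitely indexed probability vector. -/
def shannon {α : Type*} [Fintype α] (p : α → ℝ) : ℝ :=
  ∑ a, -(p a * Real.logb 2 (p a))

/-- Joint outcome type for `n` subsystems of local dimension `d`. -/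
abbrev Idx (n d : ℕ) := Fin n → Fin d

/-- The projector `|ψ⟩⟨ψ|`. -/
def proj {α : Type*} (ψ : α → ℂ) : Matrix α α ℂ :=
  Matrix.of fun x y => ψ x * (starRingEnd ℂ) (ψ y)

/-- A density operator: positive semidefinite with trace one. -/
def IsDensityOp {α : Type*} [Fintype α] [DecidableEq α] (ρ : Matrix α α ℂ) : Prop :=
  ρ.PosSemidef ∧ ρ.trace = 1

/-- `B` is an orthonormal basis of `ℂ^d` (`B i` is the `i`-th basis vector). -/
def IsONB {d : ℕ} (B : Fin d → Fin d → ℂ) : Prop :=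
  ∀ i j, (∑ x, (starRingEnd ℂ) (B i x) * B j x) = if i = j then 1 else 0

/-- Two bases of `ℂ^d` are mutually unbiased. -/
def MutUnbiased {d : ℕ} (B B' : Fin d → Fin d → ℂ) : Prop :=
  ∀ i j, ‖∑ x, (starRingEnd ℂ) (B i x) * B' j x‖ ^ 2 = 1 / d

/-- Joint outcome distribution of measuring the orthonormal basis `B l` on each factor `l`. -/
def jointProb {n d : ℕ} (ρ : Matrix (Idx n d) (Idx n d) ℂ)
    (B : Fin n → Fin d → Fin d → ℂ) (i : Idx n d) : ℝ :=
  (∑ x : Idx n d, ∑ y : Idx n d,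
    (∏ l, (starRingEnd ℂ) (B l (i l) (x l))) * ρ x y * (∏ l, B l (i l) (y l))).re

/-- Marginal distribution of subsystem `l`. -/
def margAt {n d : ℕ} (p : Idx n d → ℝ) (l : Fin n) (i : Fin d) : ℝ :=
  ∑ x : Idx n d, if x l = i then p x else 0

/-- Insert outcome `i` at position `l` into a tuple of outcomes of the other subsystems. -/
def insertAt {n d : ℕ} (l : Fin n) (i : Fin d) (g : {m : Fin n // m ≠ l} → Fin d) : Idx n d :=
  fun m => if h : m = l then i else g ⟨m, h⟩

/-- Marginal distribution of all subsystems except `l`. -/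
def margRest {n d : ℕ} (p : Idx n d → ℝ) (l : Fin n)
    (g : {m : Fin n // m ≠ l} → Fin d) : ℝ :=
  ∑ i : Fin d, p (insertAt l i g)

/-- Mutual information `I(B⁽ˡ⁾ : B⁽ˡ̄⁾)` between the outcome at subsystem `l` and the
outcomes at the remaining subsystems, for the joint outcome distribution `p`. -/
def mutualInfo {n d : ℕ} (p : Idx n d → ℝ) (l : Fin n) : ℝ :=
  shannon (margAt p l) + shannon (margRest p l) - shannon p

/-- The correlation function `C_N(ρ, {B_k^{(l)}})`. -/
def CNval {n d : ℕ} (N : ℕ) (ρ : Matrix (Idx n d) (Idx n d) ℂ)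
    (B : Fin N → Fin n → Fin d → Fin d → ℂ) : ℝ :=
  (1 / (n * N)) * ∑ k, ∑ l, mutualInfo (jointProb ρ (B k)) l

/-- `B k l` is, for each subsystem `l`, a family of `N` pairwise mutually unbiased
orthonormal bases (indexed by `k`). -/
def ValidMUBs {n d : ℕ} (N : ℕ) (B : Fin N → Fin n → Fin d → Fin d → ℂ) : Prop :=
  (∀ k l, IsONB (B k l)) ∧ ∀ l k k', k ≠ k' → MutUnbiased (B k l) (B k' l)

/-- The set of values `C_N(ρ, ·)` over all admissible choices of MUBs;
`𝒞_N(ρ)` is the supremum of this set. -/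
def CNvalues {n d : ℕ} (N : ℕ) (ρ : Matrix (Idx n d) (Idx n d) ℂ) : Set ℝ :=
  {x | ∃ B : Fin N → Fin n → Fin d → Fin d → ℂ, ValidMUBs N B ∧ x = CNval N ρ B}

/-- Single-subsystem reduced state `tr_{l̄} ρ`. -/
def reducedAt {n d : ℕ} (ρ : Matrix (Idx n d) (Idx n d) ℂ) (l : Fin n) :
    Matrix (Fin d) (Fin d) ℂ :=
  Matrix.of fun i j =>
    ∑ g : {m : Fin n // m ≠ l} → Fin d, ρ (insertAt l i g) (insertAt l j g)

/-- `ω_d = exp(2πi/d)`. -/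
def ω (d : ℕ) : ℂ := Complex.exp (2 * Real.pi * Complex.I / d)

/-- The generalized Pauli operator `X_d`. -/
def Xmat (d : ℕ) : Matrix (Fin d) (Fin d) ℂ :=
  Matrix.of fun i j => if (i : ℕ) = ((j : ℕ) + 1) % d then 1 else 0

/-- The generalized Pauli operator `Z_d`. -/
def Zmat (d : ℕ) : Matrix (Fin d) (Fin d) ℂ :=
  Matrix.of fun i j => if i = j then ω d ^ (i : ℕ) else 0

/-- The generalized Pauli operator `S_{d,(k₁,k₂)} = X_d^{k₁} Z_d^{k₂}`. -/
def Smat (d : ℕ) (k : Fin d × Fin d) : Matrix (Fin d) (Fin d) ℂ :=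
  Xmat d ^ (k.1 : ℕ) * Zmat d ^ (k.2 : ℕ)

/-- Apply a local operator `A l` to each tensor factor of a multipartite vector `ψ`,
i.e. the vector `(⊗_l A l) ψ`. -/
def applyLocal {n d : ℕ} (A : Fin n → Matrix (Fin d) (Fin d) ℂ) (ψ : Idx n d → ℂ) :
    Idx n d → ℂ :=
  fun x => ∑ y : Idx n d, (∏ l, A l (x l) (y l)) * ψ y

/-- The computational (standard) basis of `ℂ^d`, the eigenbasis of `Z_d`. -/
def stdBasis (d : ℕ) : Fin d → Fin d → ℂ :=
  fun i x => if x = i then 1 else 0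

/-- The Fourier basis of `ℂ^d`, the eigenbasis of `X_d`. -/
def fourierBasis (d : ℕ) : Fin d → Fin d → ℂ :=
  fun i x => (((Real.sqrt d)⁻¹ : ℝ) : ℂ) * ω d ^ ((i : ℕ) * (x : ℕ))

/-- The `n`-fold tensor product `⊗_l A l` as a matrix on the joint system. -/
def tensorN {n d : ℕ} (A : Fin n → Matrix (Fin d) (Fin d) ℂ) :
    Matrix (Idx n d) (Idx n d) ℂ :=
  Matrix.of fun x y => ∏ l, A l (x l) (y l)

/-- Full separability of an `n`-partite density operator. -/
def FullySep {n d : ℕ} (ρ : Matrix (Idx n d) (Idx n d) ℂ) : Prop :=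
  ∃ (J : ℕ) (p : Fin J → ℝ) (σ : Fin J → Fin n → Matrix (Fin d) (Fin d) ℂ),
    (∀ j, 0 ≤ p j) ∧ (∑ j, p j) = 1 ∧ (∀ j l, IsDensityOp (σ j l)) ∧
    ρ = ∑ j, p j • tensorN (σ j)

/-- generalized GHZ state `(1/√d) ∑_i |i⟩^{⊗n}`. -/
def GHZvec (d n : ℕ) : Idx n d → ℂ :=
  fun x => if ∀ l l', x l = x l' then (((Real.sqrt d)⁻¹ : ℝ) : ℂ) else 0


/-- Outcome distribution of measuring the basis `B` on the single-system state `σ`. -/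
def prob1 {d : ℕ} (σ : Matrix (Fin d) (Fin d) ℂ) (B : Fin d → Fin d → ℂ) (i : Fin d) : ℝ :=
  (∑ x, ∑ y, (starRingEnd ℂ) (B i x) * σ x y * B i y).re

/-- `f` is an entropic-uncertainty bound for `N` MUBs in dimension `d`:
`∑_k H(B_k|σ) ≥ f` for every set of `N` MUBs and every density operator `σ`. -/
def EntropicBound (d N : ℕ) (f : ℝ) : Prop :=
  ∀ B : Fin N → Fin d → Fin d → ℂ, (∀ k, IsONB (B k)) →
    (∀ k k', k ≠ k' → MutUnbiased (B k) (B k')) →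
    ∀ σ : Matrix (Fin d) (Fin d) ℂ, IsDensityOp σ →
      f ≤ ∑ k, shannon (prob1 σ (B k))

/-!
Measuring local bases on `ρ = ∑ⱼ pⱼ ⊗ₘ σⱼₘ` yields the classical distribution
`P(a, b) = ∑ⱼ pⱼ qⱼ(a) rⱼ(b)`, with `a` the outcome on subsystem `l` and `b` the outcomes on the
rest. Then `H(A) ≤ log₂ d`, while conditioning on the hidden index `j` gives
`H(A | B) ≥ ∑ⱼ pⱼ H(qⱼ)`; hence `I(A : B) ≤ log₂ d - ∑ⱼ pⱼ H(qⱼ)`. Summing over the `N` bases and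
applying the uncertainty bound to every `σⱼₗ` gives `N log₂ d - f`.
-/

open Real

section Entropy

variable {α β ι : Type*} [Fintype α] [Fintype β] [Fintype ι]

lemma shannon_eq_sum_negMulLog_div (p : α → ℝ) :
    shannon p = (∑ a, negMulLog (p a)) / log 2 := by
  simp only [shannon, negMulLog, logb, Finset.sum_div]
  exact Finset.sum_congr rfl fun a _ => by ring

lemma shannon_comp_equiv (e : α ≃ β) (p : β → ℝ) : shannon (p ∘ e) = shannon p :=
  e.sum_comp fun b => -(p b * logb 2 (p b))

lemma mul_negMulLog_div {s : ℝ} (hs : s ≠ 0) (X : ℝ) :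
    s * negMulLog (X / s) = negMulLog X + X * log s := by
  rw [← div_mul_cancel₀ X hs, negMulLog_mul, div_mul_cancel₀ X hs]
  simp only [negMulLog]
  field_simp
  ring

/-- Jensen's inequality for `negMulLog` with unnormalised weights `u`. -/
lemma sum_mul_negMulLog_le (u x : ι → ℝ) (hu : ∀ j, 0 ≤ u j) (hx : ∀ j, 0 ≤ x j) :
    ∑ j, u j * negMulLog (x j) ≤
      negMulLog (∑ j, u j * x j) + (∑ j, u j * x j) * log (∑ j, u j) := by
  obtain hs | hs := (Finset.sum_nonneg fun j _ => hu j : 0 ≤ ∑ j, u j).eq_or_lt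
  · have hu0 : ∀ j, u j = 0 := congrFun ((Fintype.sum_eq_zero_iff_of_nonneg hu).mp hs.symm)
    simp [hu0]
  have jensen : ∑ j, (u j / ∑ i, u i) * negMulLog (x j) ≤
      negMulLog (∑ j, (u j / ∑ i, u i) * x j) :=
    concaveOn_negMulLog.le_map_sum (fun j _ => div_nonneg (hu j) hs.le)
      (by rw [← Finset.sum_div, div_self hs.ne']) (fun j _ => Set.mem_Ici.mpr (hx j))
  calc ∑ j, u j * negMulLog (x j)
      = (∑ i, u i) * ∑ j, (u j / ∑ i, u i) * negMulLog (x j) := by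
        rw [Finset.mul_sum]
        exact Finset.sum_congr rfl fun j _ => by field_simp
    _ ≤ (∑ i, u i) * negMulLog (∑ j, (u j / ∑ i, u i) * x j) :=
        mul_le_mul_of_nonneg_left jensen hs.le
    _ = (∑ i, u i) * negMulLog ((∑ j, u j * x j) / ∑ i, u i) := by
        rw [Finset.sum_div]
        exact congrArg (_ * negMulLog ·) (Finset.sum_congr rfl fun j _ => by ring)
    _ = _ := mul_negMulLog_div hs.ne' _

lemma shannon_le_logb_card (p : α → ℝ) (hp : ∀ a, 0 ≤ p a) (hp1 : ∑ a, p a = 1) :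
    shannon p ≤ logb 2 (Fintype.card α) := by
  have h := sum_mul_negMulLog_le (fun _ => (1 : ℝ)) p (fun _ => zero_le_one) hp
  simp only [one_mul, hp1, negMulLog_one, Finset.sum_const, Finset.card_univ, nsmul_eq_mul,
    mul_one, zero_add] at h
  rw [shannon_eq_sum_negMulLog_div, logb]
  exact div_le_div_of_nonneg_right h (log_nonneg one_le_two)

end Entropy

section Mixture

variable {α β ι : Type*} [Fintype ι]

/-- The joint distribution of `(a, b)` when `a ∼ q j` and `b ∼ r j` are independent given
a hidden variable `j ∼ p`. -/
def prodMixture (p : ι → ℝ) (q : ι → α → ℝ) (r : ι → β → ℝ) (z : α × β) : ℝ :=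
  ∑ j, p j * q j z.1 * r j z.2

variable {p : ι → ℝ} {q : ι → α → ℝ} {r : ι → β → ℝ}

lemma sum_prodMixture_fst [Fintype α] (hq : ∀ j, ∑ a, q j a = 1) (b : β) :
    ∑ a, prodMixture p q r (a, b) = ∑ j, p j * r j b := by
  simp only [prodMixture]
  rw [Finset.sum_comm]
  refine Finset.sum_congr rfl fun j _ => ?_
  rw [← Finset.sum_mul, ← Finset.mul_sum, hq, mul_one]

lemma sum_prodMixture_snd [Fintype β] (hr : ∀ j, ∑ b, r j b = 1) (a : α) :
    ∑ b, prodMixture p q r (a, b) = ∑ j, p j * q j a := by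
  simp only [prodMixture]
  rw [Finset.sum_comm]
  refine Finset.sum_congr rfl fun j _ => ?_
  rw [← Finset.mul_sum, hr, mul_one]

/-- Conditioning reduces entropy: `H(A | B) ≥ H(A | B, J) = ∑ⱼ p j H(q j)`. -/
lemma sum_mul_shannon_le_shannon_prodMixture_sub [Fintype α] [Fintype β]
    (hp : ∀ j, 0 ≤ p j) (hq : ∀ j a, 0 ≤ q j a) (hr : ∀ j b, 0 ≤ r j b)
    (hq1 : ∀ j, ∑ a, q j a = 1) (hr1 : ∀ j, ∑ b, r j b = 1) :
    ∑ j, p j * shannon (q j) ≤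
      shannon (prodMixture p q r) - shannon fun b => ∑ j, p j * r j b := by
  have fiber : ∀ b, ∑ a, ∑ j, p j * r j b * negMulLog (q j a) ≤
      ∑ a, negMulLog (prodMixture p q r (a, b)) - negMulLog (∑ j, p j * r j b) := by
    intro b
    have hw : ∀ a, ∑ j, p j * r j b * q j a = prodMixture p q r (a, b) := fun a =>
      Finset.sum_congr rfl fun j _ => by ring
    calc ∑ a, ∑ j, p j * r j b * negMulLog (q j a)
        ≤ ∑ a, (negMulLog (prodMixture p q r (a, b)) +
            prodMixture p q r (a, b) * log (∑ j, p j * r j b)) :=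
          Finset.sum_le_sum fun a _ => (hw a) ▸ sum_mul_negMulLog_le _ _
            (fun j => mul_nonneg (hp j) (hr j b)) (fun j => hq j a)
      _ = _ := by
          rw [Finset.sum_add_distrib, ← Finset.sum_mul, sum_prodMixture_fst hq1, negMulLog]
          ring
  have lhs : ∑ b, ∑ a, ∑ j, p j * r j b * negMulLog (q j a) =
      ∑ j, p j * ∑ a, negMulLog (q j a) := by
    calc ∑ b, ∑ a, ∑ j, p j * r j b * negMulLog (q j a)
        = ∑ j, ∑ a, ∑ b, p j * r j b * negMulLog (q j a) := by
          rw [Finset.sum_comm]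
          exact (Finset.sum_congr rfl fun a _ => Finset.sum_comm).trans Finset.sum_comm
      _ = _ := by
          simp only [← Finset.sum_mul, ← Finset.mul_sum, hr1, mul_one]
  have h := Finset.sum_le_sum fun b (_ : b ∈ Finset.univ) => fiber b
  rw [lhs, Finset.sum_sub_distrib,
    ← Fintype.sum_prod_type_right fun z => negMulLog (prodMixture p q r z)] at h
  simp only [shannon_eq_sum_negMulLog_div, ← sub_div, mul_div_assoc', ← Finset.sum_div]
  exact div_le_div_of_nonneg_right h (log_nonneg one_le_two)

lemma shannon_marginals_sub_shannon_prodMixture_le [Fintype α] [Fintype β]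
    (hp : ∀ j, 0 ≤ p j) (hp1 : ∑ j, p j = 1) (hq : ∀ j a, 0 ≤ q j a) (hr : ∀ j b, 0 ≤ r j b)
    (hq1 : ∀ j, ∑ a, q j a = 1) (hr1 : ∀ j, ∑ b, r j b = 1) :
    shannon (fun a => ∑ b, prodMixture p q r (a, b)) +
        shannon (fun b => ∑ a, prodMixture p q r (a, b)) - shannon (prodMixture p q r) ≤
      logb 2 (Fintype.card α) - ∑ j, p j * shannon (q j) := by
  simp only [sum_prodMixture_fst hq1, sum_prodMixture_snd hr1]
  have hA : shannon (fun a => ∑ j, p j * q j a) ≤ logb 2 (Fintype.card α) := by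
    refine shannon_le_logb_card _
      (fun a => Finset.sum_nonneg fun j _ => mul_nonneg (hp j) (hq j a)) ?_
    rw [Finset.sum_comm]
    simp only [← Finset.mul_sum, hq1, mul_one, hp1]
  linarith [sum_mul_shannon_le_shannon_prodMixture_sub hp hq hr hq1 hr1]

end Mixture

section Measurement

open Matrix

variable {d : ℕ}

/-- `prob1 σ B i` is the `i`-th diagonal entry of `braMatrix B * σ * (braMatrix B)ᴴ`, which gives
its positivity and its normalisation. -/
def braMatrix (B : Fin d → Fin d → ℂ) : Matrix (Fin d) (Fin d) ℂ :=
  Matrix.of fun i x => starRingEnd ℂ (B i x)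

lemma braMatrix_mul_mul_conjTranspose_apply (σ : Matrix (Fin d) (Fin d) ℂ)
    (B : Fin d → Fin d → ℂ) (i : Fin d) :
    (braMatrix B * σ * (braMatrix B)ᴴ) i i =
      ∑ x, ∑ y, starRingEnd ℂ (B i x) * σ x y * B i y := by
  simp only [braMatrix, Matrix.mul_apply, of_apply, conjTranspose_apply, RCLike.star_def,
    RingHomCompTriple.comp_apply, RingHom.id_apply, Finset.sum_mul]
  rw [Finset.sum_comm]

lemma ofReal_prob1 {σ : Matrix (Fin d) (Fin d) ℂ} (hσ : σ.PosSemidef)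
    (B : Fin d → Fin d → ℂ) (i : Fin d) :
    (prob1 σ B i : ℂ) = ∑ x, ∑ y, starRingEnd ℂ (B i x) * σ x y * B i y := by
  have h := (hσ.mul_mul_conjTranspose_same (braMatrix B)).diag_nonneg (i := i)
  rw [braMatrix_mul_mul_conjTranspose_apply, Complex.nonneg_iff] at h
  exact Complex.ext rfl (by rw [Complex.ofReal_im, h.2])

lemma prob1_nonneg {σ : Matrix (Fin d) (Fin d) ℂ} (hσ : σ.PosSemidef)
    (B : Fin d → Fin d → ℂ) (i : Fin d) : 0 ≤ prob1 σ B i := by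
  have h := (hσ.mul_mul_conjTranspose_same (braMatrix B)).diag_nonneg (i := i)
  rw [braMatrix_mul_mul_conjTranspose_apply, Complex.nonneg_iff] at h
  exact h.1

lemma IsONB.conjTranspose_mul_braMatrix {B : Fin d → Fin d → ℂ} (hB : IsONB B) :
    (braMatrix B)ᴴ * braMatrix B = 1 := by
  refine mul_eq_one_comm.mp (Matrix.ext fun i j => ?_)
  simpa [braMatrix, Matrix.mul_apply, Matrix.one_apply, mul_comm] using hB i j

lemma sum_prob1 {σ : Matrix (Fin d) (Fin d) ℂ} (hσ : σ.trace = 1)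
    {B : Fin d → Fin d → ℂ} (hB : IsONB B) : ∑ i, prob1 σ B i = 1 := by
  have h : (braMatrix B * σ * (braMatrix B)ᴴ).trace = 1 := by
    rw [Matrix.trace_mul_cycle, hB.conjTranspose_mul_braMatrix, one_mul, hσ]
  simpa [Matrix.trace, braMatrix_mul_mul_conjTranspose_apply, prob1, Complex.re_sum]
    using congrArg Complex.re h

lemma jointProb_sum_smul {n : ℕ} {ι : Type*} [Fintype ι] (c : ι → ℝ)
    (τ : ι → Matrix (Idx n d) (Idx n d) ℂ) (Bk : Fin n → Fin d → Fin d → ℂ) (i : Idx n d) :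
    jointProb (∑ j, c j • τ j) Bk i = ∑ j, c j * jointProb (τ j) Bk i := by
  simp only [jointProb, Matrix.sum_apply, Matrix.smul_apply, Finset.mul_sum, Finset.sum_mul,
    Complex.re_sum]
  refine ((Finset.sum_congr rfl fun x _ => Finset.sum_comm).trans Finset.sum_comm).trans
    (Finset.sum_congr rfl fun j _ => Finset.sum_congr rfl fun x _ =>
      Finset.sum_congr rfl fun y _ => ?_)
  rw [Complex.real_smul, ← Complex.re_ofReal_mul]
  congr 1
  ring

lemma jointProb_tensorN {n : ℕ} {A : Fin n → Matrix (Fin d) (Fin d) ℂ}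
    (hA : ∀ m, (A m).PosSemidef) (Bk : Fin n → Fin d → Fin d → ℂ) (i : Idx n d) :
    jointProb (tensorN A) Bk i = ∏ m, prob1 (A m) (Bk m) (i m) := by
  have h : ∑ x : Idx n d, ∑ y : Idx n d,
      (∏ m, starRingEnd ℂ (Bk m (i m) (x m))) * tensorN A x y * ∏ m, Bk m (i m) (y m) =
      ∏ m, ∑ u, ∑ v, starRingEnd ℂ (Bk m (i m) u) * A m u v * Bk m (i m) v := by
    simp only [tensorN, Matrix.of_apply, ← Finset.prod_mul_distrib]
    rw [Fintype.prod_sum]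
    simp only [Fintype.prod_sum]
  rw [jointProb, h, ← Complex.ofReal_re (∏ m, _), Complex.ofReal_prod]
  simp only [ofReal_prob1 (hA _)]

end Measurement

section Split

variable {n d : ℕ}

@[simp]
lemma insertAt_self (l : Fin n) (i : Fin d) (g : {m : Fin n // m ≠ l} → Fin d) :
    insertAt l i g l = i := by
  simp [insertAt]

@[simp]
lemma insertAt_coe (l : Fin n) (i : Fin d) (g : {m : Fin n // m ≠ l} → Fin d)
    (m : {m : Fin n // m ≠ l}) : insertAt l i g m = g m := by
  simp [insertAt, m.2]

lemma funSplitAt_symm_eq_insertAt (l : Fin n) (z : Fin d × ({m : Fin n // m ≠ l} → Fin d)) :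
    (Equiv.funSplitAt l (Fin d)).symm z = insertAt l z.1 z.2 :=
  funext fun m => Equiv.funSplitAt_symm_apply l (Fin d) z m

lemma shannon_comp_insertAt (p : Idx n d → ℝ) (l : Fin n) :
    shannon (fun z : Fin d × ({m : Fin n // m ≠ l} → Fin d) => p (insertAt l z.1 z.2)) =
      shannon p := by
  simpa only [Function.comp_def, funSplitAt_symm_eq_insertAt] using
    shannon_comp_equiv (Equiv.funSplitAt l (Fin d)).symm p

lemma margAt_eq_sum_insertAt (p : Idx n d → ℝ) (l : Fin n) (i : Fin d) :
    margAt p l i = ∑ g : {m : Fin n // m ≠ l} → Fin d, p (insertAt l i g) := by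
  rw [margAt, ← (Equiv.funSplitAt l (Fin d)).symm.sum_comp, Fintype.sum_prod_type]
  simp [funSplitAt_symm_eq_insertAt]

end Split

section Separable

variable {n d : ℕ} {ι : Type*} [Fintype ι]

lemma jointProb_sum_smul_tensorN_insertAt (c : ι → ℝ)
    {σ : ι → Fin n → Matrix (Fin d) (Fin d) ℂ} (hσ : ∀ j m, (σ j m).PosSemidef)
    (Bk : Fin n → Fin d → Fin d → ℂ) (l : Fin n)
    (i : Fin d) (g : {m : Fin n // m ≠ l} → Fin d) :
    jointProb (∑ j, c j • tensorN (σ j)) Bk (insertAt l i g) =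
      prodMixture c (fun j => prob1 (σ j l) (Bk l))
        (fun j g => ∏ m : {m : Fin n // m ≠ l}, prob1 (σ j m) (Bk m) (g m)) (i, g) := by
  simp only [jointProb_sum_smul, jointProb_tensorN (hσ _), prodMixture]
  refine Finset.sum_congr rfl fun j _ => ?_
  rw [Fintype.prod_eq_mul_prod_subtype_ne _ l, insertAt_self, mul_assoc]
  simp only [insertAt_coe]

theorem mutualInfo_jointProb_separable_le {c : ι → ℝ} (hc : ∀ j, 0 ≤ c j) (hc1 : ∑ j, c j = 1)
    {σ : ι → Fin n → Matrix (Fin d) (Fin d) ℂ} (hσ : ∀ j m, IsDensityOp (σ j m))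
    {Bk : Fin n → Fin d → Fin d → ℂ} (hB : ∀ m, IsONB (Bk m)) (l : Fin n) :
    mutualInfo (jointProb (∑ j, c j • tensorN (σ j)) Bk) l ≤
      logb 2 d - ∑ j, c j * shannon (prob1 (σ j l) (Bk l)) := by
  have hdec := jointProb_sum_smul_tensorN_insertAt c (fun j m => (hσ j m).1) Bk l
  set r : ι → ({m : Fin n // m ≠ l} → Fin d) → ℝ :=
    fun j g => ∏ m : {m : Fin n // m ≠ l}, prob1 (σ j m) (Bk m) (g m)
  have hr1 : ∀ j, ∑ g, r j g = 1 := fun j => by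
    rw [← Fintype.prod_sum]
    exact Finset.prod_eq_one fun m _ => sum_prob1 (hσ j m).2 (hB m)
  have h := shannon_marginals_sub_shannon_prodMixture_le (r := r) hc hc1
    (fun j i => prob1_nonneg (hσ j l).1 (Bk l) i)
    (fun j g => Finset.prod_nonneg fun m _ => prob1_nonneg (hσ j m).1 (Bk m) (g m))
    (fun j => sum_prob1 (hσ j l).2 (hB l)) hr1
  rw [Fintype.card_fin] at h
  rw [mutualInfo, ← shannon_comp_insertAt _ l]
  unfold margRest
  simp only [funext (margAt_eq_sum_insertAt _ l), hdec, Prod.mk.eta]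
  exact h

end Separable

theorem fully_separable_mutual_info_bound_general
    (n d N : ℕ) (f : ℝ) (hf : EntropicBound d N f)
    (ρ : Matrix (Idx n d) (Idx n d) ℂ) (hsep : FullySep ρ)
    (B : Fin N → Fin n → Fin d → Fin d → ℂ) (hB : ValidMUBs N B) :
    ∀ l : Fin n, ∑ k, mutualInfo (jointProb ρ (B k)) l ≤ N * Real.logb 2 d - f := by
  intro l
  obtain ⟨J, p, σ, hp, hp1, hσ, rfl⟩ := hsep
  have uncertainty : f ≤ ∑ j, p j * ∑ k, shannon (prob1 (σ j l) (B k l)) :=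
    calc f = ∑ j, p j * f := by rw [← Finset.sum_mul, hp1, one_mul]
      _ ≤ _ := Finset.sum_le_sum fun j _ => mul_le_mul_of_nonneg_left
          (hf (B · l) (hB.1 · l) (hB.2 l) (σ j l) (hσ j l)) (hp j)
  calc ∑ k, mutualInfo (jointProb (∑ j, p j • tensorN (σ j)) (B k)) l
      ≤ ∑ k, (logb 2 d - ∑ j, p j * shannon (prob1 (σ j l) (B k l))) :=
        Finset.sum_le_sum fun k _ =>
          mutualInfo_jointProb_separable_le hp hp1 hσ (hB.1 k) l
    _ = N * logb 2 d - ∑ j, p j * ∑ k, shannon (prob1 (σ j l) (B k l)) := by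
        simp only [Finset.sum_sub_distrib, Finset.sum_const, Finset.card_univ, Fintype.card_fin,
          nsmul_eq_mul, Finset.mul_sum]
        rw [Finset.sum_comm]
    _ ≤ N * logb 2 d - f := by linarith

/-- For every fully separable state and every choice of `N` MUBs per subsystem, the total
mutual information between any subsystem and the rest is at most `N log₂ d − f`. -/
theorem fully_separable_mutual_info_bound
    (n d N : ℕ) (f : ℝ) (hf : EntropicBound d N f)
    (ρ : Matrix (Idx n d) (Idx n d) ℂ) (hρ : IsDensityOp ρ) (hsep : FullySep ρ)
    (B : Fin N → Fin n → Fin d → Fin d → ℂ) (hB : ValidMUBs N B) :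
    ∀ l : Fin n, ∑ k, mutualInfo (jointProb ρ (B k)) l ≤ N * Real.logb 2 d - f :=
  fully_separable_mutual_info_bound_general n d N f hf ρ hsep B hB

end
end Paper
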